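/- Let k ≥ 2, m = 2k+1 (so m ≥ 5 candidates, labeled a, b_1, …, b_k, c_1, …, c_k), and let λ be an integer with 1 ≤ λ ≤ m. The voters consist of, for each ℓ ∈ {1,…,k}, a set B_ℓ of λm voters and a set C_ℓ of m² voters (n = kλm + km² voters in total). Let σ be an ordinal profile in which every voter in B_ℓ ranks b_ℓ first, a second, then all candidates c_1,…,c_k, then the remaining b-candidates; and every voter in C_ℓ ranks c_ℓ first, a second, then all candidates b_1,…,b_k, then the remaining c-candidates. Let v̂ be the unit-sum valuation profile consistent with σ in which every voter in B_ℓ has value 1/2 for each of b_ℓ and a and 0 for all others, and every voter in C_ℓ has value 1/(k+2) for each of c_ℓ, a, b_1, …, b_k and 0 for all others. Then for every candidate w: (a) if w = a, there exists a unit-sum valuation profile v consistent with σ with SW(a|v) = 0 and SW(b_1|v) > 0; (b) if w = b_ℓ for some ℓ, there exists a unit-sum valuation profile v consistent with σ with SW(b_ℓ|v) ≤ λ and SW(a|v) ≥ m³/8, so that SW(a|v) ≥ (m³/(8λ))·SW(b_ℓ|v); (c) if w = c_ℓ for some ℓ, then under the true profile v = v̂ (accurate prediction), SW(a|v̂) ≥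 (λm/32)·SW(c_ℓ|v̂). (This shows that any mechanism with consistency o(λm) has robustness Ω(m³/λ).) -/

import Mathlib

/-!
A profile is consistent with `σ` as soon as every voter's value depends only on the position of
the candidate in her ranking and is non-increasing in it, so all witnesses are positional scores.
(a) Plurality scores: `a` is never ranked first. (b) The voters of `B_ℓ` spread their value
uniformly and everybody else splits it between her top two candidates: `b_ℓ` then collects
`λm · (1/m) = λ`, whereas `a` gets `1/2` from each of the `km²` voters in the groups `C_j`, and
`km²/2 ≥ m³/8`. (c) Under `v̂`, `c_ℓ` collects `m²/(k+2)` from `C_ℓ` only, while `a` gets at least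
`kλm/2` from the groups `B_j`; the claim reduces to `m² ≤ 16k(k+2)`.
-/

open Finset

/-- Social welfare of candidate `x` under valuation profile `v`. -/
noncomputable def SW {V C : Type*} [Fintype V] (v : V → C → ℝ) (x : C) : ℝ := ∑ i, v i x

/-- `v` is a valuation profile with nonnegative values summing to `1` for each voter. -/
def UnitSum {V C : Type*} [Fintype C] (v : V → C → ℝ) : Prop :=
  (∀ i x, 0 ≤ v i x) ∧ ∀ i, ∑ x, v i x = 1

/-- `σ i p` is the candidate ranked at position `p` by voter `i` (position `0` is the top);
`v` is consistent with `σ` if each voter's values are non-increasing along her ranking. -/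
def Consistent {V C : Type*} {m : ℕ} (σ : V → (Fin m ≃ C)) (v : V → C → ℝ) : Prop :=
  ∀ i, ∀ p q : Fin m, p ≤ q → v i (σ i q) ≤ v i (σ i p)

section ScoreProfile

variable {V C : Type*} {m : ℕ}

def scoreProfile (σ : V → (Fin m ≃ C)) (s : V → Fin m → ℝ) : V → C → ℝ :=
  fun i x => s i ((σ i).symm x)

theorem SW_scoreProfile [Fintype V] (σ : V → (Fin m ≃ C)) (s : V → Fin m → ℝ) (x : C) :
    SW (scoreProfile σ s) x = ∑ i, s i ((σ i).symm x) := rfl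

theorem consistent_scoreProfile (σ : V → (Fin m ≃ C)) {s : V → Fin m → ℝ}
    (hs : ∀ i, Antitone (s i)) : Consistent σ (scoreProfile σ s) := by
  intro i p q hpq
  simpa [scoreProfile] using hs i hpq

theorem unitSum_scoreProfile [Fintype C] (σ : V → (Fin m ≃ C)) {s : V → Fin m → ℝ}
    (hs₀ : ∀ i p, 0 ≤ s i p) (hs₁ : ∀ i, ∑ p, s i p = 1) : UnitSum (scoreProfile σ s) :=
  ⟨fun i _ => hs₀ i _, fun i => (Equiv.sum_comp (σ i).symm (s i)).trans (hs₁ i)⟩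

noncomputable def approvalScore (r : ℕ) (p : Fin m) : ℝ := if (p : ℕ) < r then 1 / r else 0

theorem approvalScore_of_lt {r : ℕ} {p : Fin m} (h : (p : ℕ) < r) :
    approvalScore r p = 1 / r := if_pos h

theorem approvalScore_of_le {r : ℕ} {p : Fin m} (h : r ≤ (p : ℕ)) : approvalScore r p = 0 :=
  if_neg h.not_gt

theorem approvalScore_nonneg (r : ℕ) (p : Fin m) : 0 ≤ approvalScore r p := by
  unfold approvalScore
  split_ifs <;> positivity

theorem approvalScore_antitone (r : ℕ) : Antitone (approvalScore (m := m) r) := by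
  intro p q hpq
  by_cases hq : (q : ℕ) < r
  · rw [approvalScore_of_lt hq, approvalScore_of_lt (lt_of_le_of_lt (Fin.le_def.mp hpq) hq)]
  · rw [approvalScore_of_le (not_lt.mp hq)]
    exact approvalScore_nonneg r p

theorem sum_approvalScore {r : ℕ} (hr : r ≠ 0) (hrm : r ≤ m) :
    ∑ p : Fin m, approvalScore r p = 1 := by
  unfold approvalScore
  rw [← sum_filter, sum_const, Fin.card_filter_val_lt, min_eq_right hrm, nsmul_eq_mul]
  field_simp

theorem exists_SW_eq_zero_lt_SW_of_forall_top_ne [Fintype V] [Fintype C]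
    (σ : V → (Fin (m + 1) ≃ C)) {a b : C} (ha : ∀ i, σ i 0 ≠ a) (hb : ∃ i, σ i 0 = b) :
    ∃ v, UnitSum v ∧ Consistent σ v ∧ SW v a = 0 ∧ 0 < SW v b := by
  refine ⟨scoreProfile σ fun _ => approvalScore 1,
    unitSum_scoreProfile σ (fun _ => approvalScore_nonneg 1)
      (fun _ => sum_approvalScore one_ne_zero (by omega)),
    consistent_scoreProfile σ fun _ => approvalScore_antitone 1, ?_, ?_⟩
  · refine sum_eq_zero fun i _ => approvalScore_of_le ?_
    have hrank : (σ i).symm a ≠ 0 := fun h => ha i (by rw [← h, Equiv.apply_symm_apply])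
    exact Nat.one_le_iff_ne_zero.mpr (Fin.val_ne_zero_iff.mpr hrank)
  · obtain ⟨i, hi⟩ := hb
    refine sum_pos' (fun j _ => approvalScore_nonneg _ _) ⟨i, mem_univ _, ?_⟩
    show 0 < approvalScore 1 ((σ i).symm b)
    rw [← hi, Equiv.symm_apply_apply, approvalScore_of_lt (by simp)]
    norm_num

theorem exists_SW_eq_card_div_and_card_div_two_le_SW [Fintype V] [Fintype C] [DecidableEq V]
    (σ : V → (Fin m ≃ C)) (hm : 2 ≤ m) {S T : Finset V} (hST : Disjoint S T) {a b : C}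
    (hb : ∀ i ∉ S, 2 ≤ ((σ i).symm b : ℕ)) (ha : ∀ i ∈ T, ((σ i).symm a : ℕ) < 2) :
    ∃ v, UnitSum v ∧ Consistent σ v ∧ SW v b = #S / m ∧ (#T : ℝ) / 2 ≤ SW v a := by
  set s : V → Fin m → ℝ := fun i p => if i ∈ S then approvalScore m p else approvalScore 2 p
  have hsb : ∀ i, s i ((σ i).symm b) = if i ∈ S then (1 : ℝ) / m else 0 := by
    intro i
    by_cases hi : i ∈ S
    · simp only [s, if_pos hi, approvalScore_of_lt ((σ i).symm b).is_lt]
    · simp only [s, if_neg hi, approvalScore_of_le (hb i hi)]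
  have hsa : ∀ i ∈ T, s i ((σ i).symm a) = 1 / 2 := by
    intro i hi
    simp only [s, if_neg (disjoint_right.mp hST hi), approvalScore_of_lt (ha i hi)]
    norm_num
  refine ⟨scoreProfile σ s, unitSum_scoreProfile σ (fun i p => ?_) (fun i => ?_),
    consistent_scoreProfile σ (fun i => ?_), ?_, ?_⟩
  · simp only [s]
    split_ifs <;> exact approvalScore_nonneg _ _
  · simp only [s]
    split_ifs
    · exact sum_approvalScore (by omega) le_rfl
    · exact sum_approvalScore two_ne_zero hm
  · simp only [s]
    split_ifs <;> exact approvalScore_antitone _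
  · rw [SW_scoreProfile, sum_congr rfl fun i _ => hsb i, sum_ite_mem, univ_inter, sum_const,
      nsmul_eq_mul, mul_one_div]
  · calc (#T : ℝ) / 2 = ∑ i ∈ T, s i ((σ i).symm a) := by
          rw [sum_congr rfl hsa, sum_const, nsmul_eq_mul, mul_one_div]
      _ ≤ SW (scoreProfile σ s) a :=
          sum_le_sum_of_subset_of_nonneg (subset_univ T) fun i _ _ => by
            simp only [s]
            split_ifs <;> exact approvalScore_nonneg _ _

end ScoreProfile

theorem two_le_val_symm_apply {C : Type*} {m : ℕ} (hm : 2 ≤ m) {e : Fin m ≃ C} {x : C}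
    (h₀ : e ⟨0, by omega⟩ ≠ x) (h₁ : e ⟨1, hm⟩ ≠ x) : 2 ≤ (e.symm x : ℕ) := by
  by_contra! hlt
  obtain h | h : e.symm x = ⟨0, by omega⟩ ∨ e.symm x = ⟨1, hm⟩ := by
    simp only [Fin.ext_iff]
    omega
  · exact h₀ (by rw [← h, e.apply_symm_apply])
  · exact h₁ (by rw [← h, e.apply_symm_apply])

section LowerBoundInstance

open Sum

variable {k lam : ℕ}

/-- With `m = 2k+1`, the voters of `B_ℓ` are `inl (ℓ, ·)` and those of `C_ℓ` are `inr (ℓ, ·)`;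
the candidates are `a = inl ()`, `b_ℓ = inr (inl ℓ)` and `c_ℓ = inr (inr ℓ)`. -/
abbrev Voter (k lam : ℕ) : Type :=
  (Fin k × Fin (lam * (2 * k + 1))) ⊕ (Fin k × Fin ((2 * k + 1) ^ 2))

theorem exists_SW_b_le_lam_and_cube_div_eight_le_SW_a (hk : 1 ≤ k) (hlam : 1 ≤ lam)
    (σ : Voter k lam → (Fin (2 * k + 1) ≃ (Unit ⊕ Fin k ⊕ Fin k)))
    (hB : ∀ (ℓ : Fin k) (t : Fin (lam * (2 * k + 1))),
      σ (inl (ℓ, t)) ⟨0, by omega⟩ = inr (inl ℓ) ∧ σ (inl (ℓ, t)) ⟨1, by omega⟩ = inl ())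
    (hC : ∀ (ℓ : Fin k) (t : Fin ((2 * k + 1) ^ 2)),
      σ (inr (ℓ, t)) ⟨0, by omega⟩ = inr (inr ℓ) ∧ σ (inr (ℓ, t)) ⟨1, by omega⟩ = inl ())
    (ℓ : Fin k) :
    ∃ v, UnitSum v ∧ Consistent σ v ∧
      SW v (inr (inl ℓ)) ≤ (lam : ℝ) ∧
      (2 * (k : ℝ) + 1) ^ 3 / 8 ≤ SW v (inl ()) ∧
      ((2 * (k : ℝ) + 1) ^ 3 / (8 * lam)) * SW v (inr (inl ℓ)) ≤ SW v (inl ()) := by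
  set S : Finset (Voter k lam) := univ.map ⟨fun t => inl (ℓ, t), fun t t' h => by simpa using h⟩
  set T : Finset (Voter k lam) := univ.map Function.Embedding.inr
  have hST : Disjoint S T := by simp [S, T, disjoint_left]
  have hb : ∀ i ∉ S, 2 ≤ ((σ i).symm (inr (inl ℓ)) : ℕ) := by
    rintro (⟨l, t⟩ | ⟨l, t⟩) hi
    · have hl : l ≠ ℓ := by
        rintro rfl
        exact hi (mem_map_of_mem _ (mem_univ t))
      exact two_le_val_symm_apply (by omega) (by rw [(hB l t).1]; simpa using hl)
        (by rw [(hB l t).2]; simp)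
    · exact two_le_val_symm_apply (by omega) (by rw [(hC l t).1]; simp)
        (by rw [(hC l t).2]; simp)
  have ha : ∀ i ∈ T, ((σ i).symm (inl ()) : ℕ) < 2 := by
    intro i hi
    obtain ⟨⟨l, t⟩, -, rfl⟩ := mem_map.mp hi
    show ((σ (inr (l, t))).symm (inl ()) : ℕ) < 2
    rw [(Equiv.symm_apply_eq _).mpr (hC l t).2.symm]
    norm_num
  obtain ⟨v, hvU, hvC, hvb, hva⟩ :=
    exists_SW_eq_card_div_and_card_div_two_le_SW σ (by omega) hST hb ha
  have hvb' : SW v (inr (inl ℓ)) = lam := by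
    rw [hvb, card_map, card_univ, Fintype.card_fin]
    push_cast
    field_simp
  have hva' : (2 * (k : ℝ) + 1) ^ 3 / 8 ≤ SW v (inl ()) := by
    refine le_trans ?_ hva
    rw [card_map, card_univ, Fintype.card_prod, Fintype.card_fin, Fintype.card_fin]
    have hk' : (1 : ℝ) ≤ k := by exact_mod_cast hk
    push_cast
    nlinarith [sq_nonneg (2 * (k : ℝ) + 1)]
  refine ⟨v, hvU, hvC, hvb'.le, hva', ?_⟩
  calc (2 * (k : ℝ) + 1) ^ 3 / (8 * lam) * SW v (inr (inl ℓ))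
      = (2 * (k : ℝ) + 1) ^ 3 / 8 := by rw [hvb']; field_simp
    _ ≤ SW v (inl ()) := hva'

theorem SW_c_eq (vhat : Voter k lam → Unit ⊕ Fin k ⊕ Fin k → ℝ)
    (hB : ∀ ℓ t x, x ≠ inr (inl ℓ) → x ≠ inl () → vhat (inl (ℓ, t)) x = 0)
    (hC : ∀ ℓ t, vhat (inr (ℓ, t)) (inr (inr ℓ)) = 1 / ((k : ℝ) + 2))
    (hC' : ∀ ℓ t j, j ≠ ℓ → vhat (inr (ℓ, t)) (inr (inr j)) = 0) (ℓ : Fin k) :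
    SW vhat (inr (inr ℓ)) = (2 * (k : ℝ) + 1) ^ 2 / ((k : ℝ) + 2) := by
  have hBc : ∀ l t, vhat (inl (l, t)) (inr (inr ℓ)) = 0 := fun l t => hB l t _ (by simp) (by simp)
  have hCc : ∀ l, ∑ t, vhat (inr (l, t)) (inr (inr ℓ)) =
      if ℓ = l then (2 * (k : ℝ) + 1) ^ 2 / ((k : ℝ) + 2) else 0 := by
    intro l
    split_ifs with h
    · subst h
      simp [hC, div_eq_mul_inv]
    · exact sum_eq_zero fun t _ => hC' l t ℓ h
  simp [SW, Fintype.sum_sum_type, Fintype.sum_prod_type, hBc, hCc]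

theorem SW_a_eq (vhat : Voter k lam → Unit ⊕ Fin k ⊕ Fin k → ℝ)
    (hB : ∀ ℓ t, vhat (inl (ℓ, t)) (inl ()) = 1 / 2)
    (hC : ∀ ℓ t, vhat (inr (ℓ, t)) (inl ()) = 1 / ((k : ℝ) + 2)) :
    SW vhat (inl ()) =
      k * (lam * (2 * k + 1)) / 2 + k * (2 * (k : ℝ) + 1) ^ 2 / ((k : ℝ) + 2) := by
  simp [SW, Fintype.sum_sum_type, hB, hC]
  ring

theorem lam_mul_div_mul_SW_c_le_SW_a (hk : 1 ≤ k)
    (vhat : Voter k lam → Unit ⊕ Fin k ⊕ Fin k → ℝ)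
    (hB : ∀ ℓ t, vhat (inl (ℓ, t)) (inl ()) = 1 / 2 ∧
      ∀ x, x ≠ inr (inl ℓ) → x ≠ inl () → vhat (inl (ℓ, t)) x = 0)
    (hC : ∀ ℓ t, vhat (inr (ℓ, t)) (inr (inr ℓ)) = 1 / ((k : ℝ) + 2) ∧
      vhat (inr (ℓ, t)) (inl ()) = 1 / ((k : ℝ) + 2) ∧
      ∀ j, j ≠ ℓ → vhat (inr (ℓ, t)) (inr (inr j)) = 0) (ℓ : Fin k) :
    ((lam : ℝ) * (2 * (k : ℝ) + 1) / 32) * SW vhat (inr (inr ℓ)) ≤ SW vhat (inl ()) := by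
  rw [SW_c_eq vhat (fun l t => (hB l t).2) (fun l t => (hC l t).1) (fun l t => (hC l t).2.2),
    SW_a_eq vhat (fun l t => (hB l t).1) (fun l t => (hC l t).2.1)]
  have hk' : (1 : ℝ) ≤ k := by exact_mod_cast hk
  have hm2 : (2 * (k : ℝ) + 1) ^ 2 ≤ 16 * k * (k + 2) := by nlinarith
  have hlm : (0 : ℝ) ≤ lam * (2 * k + 1) := by positivity
  have hB_part : ((lam : ℝ) * (2 * k + 1) / 32) * ((2 * (k : ℝ) + 1) ^ 2 / ((k : ℝ) + 2)) ≤
      k * (lam * (2 * k + 1)) / 2 := by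
    rw [div_mul_div_comm, div_le_iff₀ (by positivity)]
    nlinarith [mul_le_mul_of_nonneg_left hm2 hlm]
  have hC_part : (0 : ℝ) ≤ k * (2 * (k : ℝ) + 1) ^ 2 / ((k : ℝ) + 2) := by positivity
  linarith

end LowerBoundInstance

/-- The lower-bound instance showing that any voting mechanism with consistency `o(λm)` has
robustness `Ω(m³/λ)`, where `m = 2k+1`. Voters: for each `ℓ`, a set `B_ℓ` of `λm` voters
(`Sum.inl (ℓ, ·)`) and a set `C_ℓ` of `m²` voters (`Sum.inr (ℓ, ·)`). Candidates:
`a = Sum.inl ()`, `b ℓ = Sum.inr (Sum.inl ℓ)`, `c ℓ = Sum.inr (Sum.inr ℓ)`. -/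
theorem stmt8 (k lam : ℕ) (hk : 2 ≤ k) (hlam1 : 1 ≤ lam)
    (σ : ((Fin k × Fin (lam * (2 * k + 1))) ⊕ (Fin k × Fin ((2 * k + 1) ^ 2))) →
      (Fin (2 * k + 1) ≃ (Unit ⊕ Fin k ⊕ Fin k)))
    (hσB : ∀ (ℓ : Fin k) (t : Fin (lam * (2 * k + 1))),
      σ (Sum.inl (ℓ, t)) ⟨0, by omega⟩ = Sum.inr (Sum.inl ℓ) ∧
      σ (Sum.inl (ℓ, t)) ⟨1, by omega⟩ = Sum.inl () ∧
      ∀ p : Fin (2 * k + 1), 2 ≤ (p : ℕ) → (p : ℕ) ≤ k + 1 →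
        ∃ j : Fin k, σ (Sum.inl (ℓ, t)) p = Sum.inr (Sum.inr j))
    (hσC : ∀ (ℓ : Fin k) (t : Fin ((2 * k + 1) ^ 2)),
      σ (Sum.inr (ℓ, t)) ⟨0, by omega⟩ = Sum.inr (Sum.inr ℓ) ∧
      σ (Sum.inr (ℓ, t)) ⟨1, by omega⟩ = Sum.inl () ∧
      ∀ p : Fin (2 * k + 1), 2 ≤ (p : ℕ) → (p : ℕ) ≤ k + 1 →
        ∃ j : Fin k, σ (Sum.inr (ℓ, t)) p = Sum.inr (Sum.inl j))
    (vhat : ((Fin k × Fin (lam * (2 * k + 1))) ⊕ (Fin k × Fin ((2 * k + 1) ^ 2))) →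
      (Unit ⊕ Fin k ⊕ Fin k) → ℝ)
    (hvhatB : ∀ (ℓ : Fin k) (t : Fin (lam * (2 * k + 1))),
      vhat (Sum.inl (ℓ, t)) (Sum.inr (Sum.inl ℓ)) = 1 / 2 ∧
      vhat (Sum.inl (ℓ, t)) (Sum.inl ()) = 1 / 2 ∧
      ∀ x, x ≠ Sum.inr (Sum.inl ℓ) → x ≠ Sum.inl () → vhat (Sum.inl (ℓ, t)) x = 0)
    (hvhatC' : ∀ (ℓ : Fin k) (t : Fin ((2 * k + 1) ^ 2)),
      vhat (Sum.inr (ℓ, t)) (Sum.inr (Sum.inr ℓ)) = 1 / ((k : ℝ) + 2) ∧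
      vhat (Sum.inr (ℓ, t)) (Sum.inl ()) = 1 / ((k : ℝ) + 2) ∧
      (∀ j : Fin k, vhat (Sum.inr (ℓ, t)) (Sum.inr (Sum.inl j)) = 1 / ((k : ℝ) + 2)) ∧
      ∀ j : Fin k, j ≠ ℓ → vhat (Sum.inr (ℓ, t)) (Sum.inr (Sum.inr j)) = 0) :
    ∀ w : Unit ⊕ Fin k ⊕ Fin k,
      (w = Sum.inl () →
        ∃ v, UnitSum v ∧ Consistent σ v ∧
          SW v (Sum.inl ()) = 0 ∧ 0 < SW v (Sum.inr (Sum.inl (⟨0, by omega⟩ : Fin k)))) ∧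
      (∀ ℓ : Fin k, w = Sum.inr (Sum.inl ℓ) →
        ∃ v, UnitSum v ∧ Consistent σ v ∧
          SW v (Sum.inr (Sum.inl ℓ)) ≤ (lam : ℝ) ∧
          (2 * (k : ℝ) + 1) ^ 3 / 8 ≤ SW v (Sum.inl ()) ∧
          ((2 * (k : ℝ) + 1) ^ 3 / (8 * lam)) * SW v (Sum.inr (Sum.inl ℓ)) ≤
            SW v (Sum.inl ())) ∧
      (∀ ℓ : Fin k, w = Sum.inr (Sum.inr ℓ) →
        ((lam : ℝ) * (2 * (k : ℝ) + 1) / 32) * SW vhat (Sum.inr (Sum.inr ℓ)) ≤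
          SW vhat (Sum.inl ())) := by
  intro w
  refine ⟨fun _ => ?_, fun ℓ _ => ?_, fun ℓ _ => ?_⟩
  · refine exists_SW_eq_zero_lt_SW_of_forall_top_ne σ ?_
      ⟨Sum.inl (⟨0, by omega⟩, ⟨0, Nat.mul_pos hlam1 (by omega)⟩), (hσB _ _).1⟩
    rintro (⟨ℓ, t⟩ | ⟨ℓ, t⟩) h
    · exact Sum.inr_ne_inl ((hσB ℓ t).1.symm.trans h)
    · exact Sum.inr_ne_inl ((hσC ℓ t).1.symm.trans h)
  · exact exists_SW_b_le_lam_and_cube_div_eight_le_SW_a (by omega) hlam1 σ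
      (fun ℓ t => ⟨(hσB ℓ t).1, (hσB ℓ t).2.1⟩) (fun ℓ t => ⟨(hσC ℓ t).1, (hσC ℓ t).2.1⟩) ℓ
  · exact lam_mul_div_mul_SW_c_le_SW_a (by omega) vhat (fun ℓ t => (hvhatB ℓ t).2)
      (fun ℓ t => ⟨(hvhatC' ℓ t).1, (hvhatC' ℓ t).2.1, (hvhatC' ℓ t).2.2.2⟩) ℓ
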